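/- Let A, B be abelian varieties over a field such that End⁰(A) is a division algebra, and let f = [[α,β],[γ,δ]] ∈ Sp(A×Â, B×B̂) be a symplectic isomorphism. Then either β : Â → B is an isogeny, or α : A → B and δ : Â → B̂ are isomorphisms with δ = (α̂)⁻¹. -/
import Mathlib


open CategoryTheory

variable {𝒞 : Type*} [Category 𝒞] [Preadditive 𝒞]

/-- A morphism `P.1 × P.2 ⟶ Q.1 × Q.2` presented as a `2 × 2` matrix of components:
`m.1.1 : P.1 ⟶ Q.1` (α), `m.1.2 : P.2 ⟶ Q.1` (β), `m.2.1 : P.1 ⟶ Q.2` (γ),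
`m.2.2 : P.2 ⟶ Q.2` (δ). -/
abbrev Hom2 (P Q : 𝒞 × 𝒞) :=
  ((P.1 ⟶ Q.1) × (P.2 ⟶ Q.1)) × ((P.1 ⟶ Q.2) × (P.2 ⟶ Q.2))

/-- Matrix composition (diagrammatic order: `mcomp m n = n ∘ m`). -/
def mcomp {P Q R : 𝒞 × 𝒞} (m : Hom2 P Q) (n : Hom2 Q R) : Hom2 P R :=
  ((m.1.1 ≫ n.1.1 + m.2.1 ≫ n.1.2, m.1.2 ≫ n.1.1 + m.2.2 ≫ n.1.2),
   (m.1.1 ≫ n.2.1 + m.2.1 ≫ n.2.2, m.1.2 ≫ n.2.1 + m.2.2 ≫ n.2.2))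

/-- The identity matrix. -/
def mid (P : 𝒞 × 𝒞) : Hom2 P P := ((𝟙 P.1, 0), (0, 𝟙 P.2))

variable (D : 𝒞 → 𝒞) (dmap : ∀ X Y : 𝒞, (X ⟶ Y) → (D Y ⟶ D X))
variable (k : ∀ X : 𝒞, X ⟶ D (D X)) (k' : ∀ X : 𝒞, D (D X) ⟶ X)

/-- The dagger `f† = [[δ̂, −β̂], [−γ̂, α̂]]` of a matrix `f = [[α,β],[γ,δ]]` from
`A × D A` to `B × D B`, using the dual-morphism operation `dmap` and the canonical
biduality (iso)morphisms `k`, `k'`. -/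
def mdag {A B : 𝒞} (m : Hom2 (A, D A) (B, D B)) : Hom2 (B, D B) (A, D A) :=
  ((k B ≫ dmap (D A) (D B) m.2.2 ≫ k' A, -(dmap (D A) B m.1.2 ≫ k' A)),
   (-(k B ≫ dmap A (D B) m.2.1), dmap A B m.1.1))

open CategoryTheory.Limits

/-- `X` and `Y` are isogenous. -/
def Isog (X Y : 𝒞) : Prop :=
  ∃ (φ : X ⟶ Y) (ψ : Y ⟶ X) (n : ℕ), 0 < n ∧
    φ ≫ ψ = (n : ℤ) • 𝟙 X ∧ ψ ≫ φ = (n : ℤ) • 𝟙 Y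

lemma smul_cancel_aux
    (htf : ∀ (X Y : 𝒞) (n : ℤ) (f : X ⟶ Y), n • f = 0 → n = 0 ∨ f = 0)
    {X Y : 𝒞} {n : ℤ} (hn : n ≠ 0) {f g : X ⟶ Y} (h : n • f = n • g) : f = g := by
  rcases htf X Y n (f - g) (by rw [smul_sub, h, sub_self]) with h0 | h0
  · exact absurd h0 hn
  · exact sub_eq_zero.mp h0

/-- Let `A`, `B` be abelian varieties (modelled in a preadditive
category with biproducts, duality data `D, dmap, k, k'`, torsion-free Hom-groups,
Poincaré complete reducibility axiomatised by `μ`, and every variety isogenous to its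
dual) such that `End⁰(A)` is a division algebra (equivalently: every nonzero
endomorphism of `A` is an isogeny).  If `f = [[α,β],[γ,δ]] ∈ Sp(A×Â, B×B̂)` is a
symplectic isomorphism, then either `β : Â ⟶ B` is an isogeny, or `α : A ⟶ B` is an
isomorphism and `δ = (α̂)⁻¹`. -/
theorem stmt16 [HasBinaryBiproducts 𝒞] {A B : 𝒞}
    (hd1 : ∀ X : 𝒞, dmap X X (𝟙 X) = 𝟙 (D X))
    (hd2 : ∀ (X Y Z : 𝒞) (f : X ⟶ Y) (g : Y ⟶ Z),
      dmap X Z (f ≫ g) = dmap Y Z g ≫ dmap X Y f)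
    (hd3 : ∀ (X Y : 𝒞) (f g : X ⟶ Y), dmap X Y (f + g) = dmap X Y f + dmap X Y g)
    (hk1 : ∀ X : 𝒞, k X ≫ k' X = 𝟙 X)
    (hk2 : ∀ X : 𝒞, k' X ≫ k X = 𝟙 (D (D X)))
    (hnat : ∀ (X Y : 𝒞) (f : X ⟶ Y),
      f ≫ k Y = k X ≫ dmap (D Y) (D X) (dmap X Y f))
    (hbid : ∀ X : 𝒞, k (D X) ≫ dmap X (D (D X)) (k X) = 𝟙 (D X))
    (htf : ∀ (X Y : 𝒞) (n : ℤ) (f : X ⟶ Y), n • f = 0 → n = 0 ∨ f = 0)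
    (ι : Type*) (μ : 𝒞 → ι →₀ ℕ)
    (hμ : ∀ X Y : 𝒞, Isog X Y ↔ μ X = μ Y)
    (hμadd : ∀ X Y : 𝒞, μ (X ⊞ Y) = μ X + μ Y)
    (hdual : ∀ X : 𝒞, Isog X (D X))
    (hdiv : ∀ φ : A ⟶ A, φ ≠ 0 → ∃ (ψ : A ⟶ A) (n : ℕ), 0 < n ∧
      φ ≫ ψ = (n : ℤ) • 𝟙 A ∧ ψ ≫ φ = (n : ℤ) • 𝟙 A)
    (m : Hom2 (A, D A) (B, D B))
    (h1 : mcomp m (mdag D dmap k k' m) = mid (A, D A))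
    (h2 : mcomp (mdag D dmap k k' m) m = mid (B, D B)) :
    (∃ (ψ : B ⟶ D A) (n : ℕ), 0 < n ∧
        m.1.2 ≫ ψ = (n : ℤ) • 𝟙 (D A) ∧ ψ ≫ m.1.2 = (n : ℤ) • 𝟙 B) ∨
    ((∃ α' : B ⟶ A, m.1.1 ≫ α' = 𝟙 A ∧ α' ≫ m.1.1 = 𝟙 B) ∧
      m.2.2 ≫ dmap A B m.1.1 = 𝟙 (D A) ∧ dmap A B m.1.1 ≫ m.2.2 = 𝟙 (D B)) := by
  classical
  have hdmap0 : ∀ X Y : 𝒞, dmap X Y 0 = 0 := by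
    intro X Y
    have h := hd3 X Y 0 0
    rw [add_zero] at h
    exact (left_eq_add.mp h)
  -- extract the component equations
  have h1a := congrArg (fun p => p.1.1) h1
  have h1b := congrArg (fun p => p.1.2) h1
  have h1c := congrArg (fun p => p.2.1) h1
  have h1d := congrArg (fun p => p.2.2) h1
  have h2a := congrArg (fun p => p.1.1) h2
  have h2b := congrArg (fun p => p.1.2) h2
  have h2c := congrArg (fun p => p.2.1) h2
  have h2d := congrArg (fun p => p.2.2) h2
  simp only [mcomp, mdag, mid] at h1a h1b h1c h1d h2a h2b h2c h2d
  by_cases hβ : m.1.2 = 0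
  · -- β = 0 : right disjunct
    right
    simp only [hβ, hdmap0, zero_comp, comp_zero, neg_zero, Preadditive.neg_comp, Preadditive.comp_neg,
      add_zero, zero_add] at h1a h1d h2a h2d
    refine ⟨⟨k B ≫ dmap (D A) (D B) m.2.2 ≫ k' A, h1a, h2a⟩, h1d, h2d⟩
  · -- β ≠ 0 : β is an isogeny
    left
    -- the matrix gives an isomorphism A ⊞ D A ≅ B ⊞ D B
    let F : (A ⊞ D A : 𝒞) ⟶ (B ⊞ D B : 𝒞) :=
      biprod.lift (biprod.desc m.1.1 m.1.2) (biprod.desc m.2.1 m.2.2)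
    let G : (B ⊞ D B : 𝒞) ⟶ (A ⊞ D A : 𝒞) :=
      biprod.lift (biprod.desc (mdag D dmap k k' m).1.1 (mdag D dmap k k' m).1.2)
        (biprod.desc (mdag D dmap k k' m).2.1 (mdag D dmap k k' m).2.2)
    have hFG : F ≫ G = 𝟙 _ := by
      ext <;>
        simp only [F, G, mdag, Category.assoc, biprod.lift_fst, biprod.lift_snd,
          biprod.inl_desc_assoc, biprod.inr_desc_assoc, biprod.lift_desc,
          biprod.inl_desc, biprod.inr_desc, Category.comp_id, Category.id_comp] <;>
      first
        | simpa using h1a | simpa using h1b | simpa using h1c | simpa using h1d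
    have hGF : G ≫ F = 𝟙 _ := by
      ext <;>
        simp only [F, G, mdag, Category.assoc, biprod.lift_fst, biprod.lift_snd,
          biprod.inl_desc_assoc, biprod.inr_desc_assoc, biprod.lift_desc,
          biprod.inl_desc, biprod.inr_desc, Category.comp_id, Category.id_comp] <;>
      first
        | simpa using h2a | simpa using h2b | simpa using h2c | simpa using h2d
    have hIso : Isog (A ⊞ D A : 𝒞) (B ⊞ D B : 𝒞) :=
      ⟨F, G, 1, one_pos, by simpa using hFG, by simpa using hGF⟩
    have hμAB : μ A = μ B := by
      have h := (hμ _ _).mp hIso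
      rw [hμadd, hμadd, ← (hμ A (D A)).mp (hdual A), ← (hμ B (D B)).mp (hdual B)] at h
      ext i
      have := congrArg (fun f => f i) h
      simp only [Finsupp.add_apply] at this
      omega
    obtain ⟨w, w', a, ha, haw1, haw2⟩ := hdual A
    obtain ⟨s, s', b, hb, hbs1, hbs2⟩ := (hμ B A).mpr hμAB.symm
    set φ := m.1.2 with hφ
    set e : A ⟶ A := w ≫ φ ≫ s with he
    have hane : (a : ℤ) ≠ 0 := by exact_mod_cast ha.ne'
    have hbne : (b : ℤ) ≠ 0 := by exact_mod_cast hb.ne'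
    have hene : e ≠ 0 := by
      intro h0
      have : ((a : ℤ) * b) • φ = 0 := by
        have : w' ≫ e ≫ s' = 0 := by rw [h0]; simp
        rw [he] at this
        calc ((a : ℤ) * b) • φ = ((a : ℤ) • 𝟙 (D A)) ≫ φ ≫ ((b : ℤ) • 𝟙 B) := by
              simp [Preadditive.zsmul_comp, Preadditive.comp_zsmul, smul_smul,
                mul_comm, mul_left_comm]
              norm_cast
          _ = (w' ≫ w) ≫ φ ≫ (s ≫ s') := by rw [haw2, hbs1]
          _ = w' ≫ (w ≫ φ ≫ s) ≫ s' := by simp [Category.assoc]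
          _ = 0 := this
      rcases htf _ _ _ _ this with h' | h'
      · exact (mul_ne_zero hane hbne) h'
      · exact hβ h'
    obtain ⟨ψ, n, hn, hd1', hd2'⟩ := hdiv e hene
    refine ⟨s ≫ ψ ≫ w, n, hn, ?_, ?_⟩
    · -- φ ≫ (s ≫ ψ ≫ w) = n • 𝟙 (D A)
      refine smul_cancel_aux htf hane ?_
      calc (a : ℤ) • (φ ≫ (s ≫ ψ ≫ w))
          = ((a : ℤ) • 𝟙 (D A)) ≫ φ ≫ s ≫ ψ ≫ w := by
            simp [Preadditive.zsmul_comp]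
        _ = (w' ≫ w) ≫ φ ≫ s ≫ ψ ≫ w := by rw [haw2]
        _ = w' ≫ (e ≫ ψ) ≫ w := by simp [he, Category.assoc]
        _ = w' ≫ ((n : ℤ) • 𝟙 A) ≫ w := by rw [hd1']
        _ = (n : ℤ) • (w' ≫ w) := by
            simp [Preadditive.zsmul_comp, Preadditive.comp_zsmul]
        _ = (a : ℤ) • ((n : ℤ) • 𝟙 (D A)) := by rw [haw2]; rw [smul_comm]
    · -- (s ≫ ψ ≫ w) ≫ φ = n • 𝟙 B
      refine smul_cancel_aux htf (mul_ne_zero hbne hbne) ?_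
      calc ((b : ℤ) * b) • ((s ≫ ψ ≫ w) ≫ φ)
          = ((b : ℤ) • 𝟙 B) ≫ ((s ≫ ψ ≫ w) ≫ φ) ≫ ((b : ℤ) • 𝟙 B) := by
            simp [Preadditive.zsmul_comp, Preadditive.comp_zsmul, mul_smul, mul_comm]
        _ = (s ≫ s') ≫ ((s ≫ ψ ≫ w) ≫ φ) ≫ (s ≫ s') := by rw [hbs1]
        _ = s ≫ (s' ≫ s) ≫ ψ ≫ (w ≫ φ ≫ s) ≫ s' := by simp [Category.assoc]
        _ = s ≫ ((b : ℤ) • 𝟙 A) ≫ ψ ≫ e ≫ s' := by rw [hbs2, he]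
        _ = (b : ℤ) • (s ≫ (ψ ≫ e) ≫ s') := by
            simp [Preadditive.zsmul_comp, Preadditive.comp_zsmul, Category.assoc]
        _ = (b : ℤ) • (s ≫ ((n : ℤ) • 𝟙 A) ≫ s') := by rw [hd2']
        _ = ((b : ℤ) * b) • ((n : ℤ) • 𝟙 B) := by
            simp [Preadditive.zsmul_comp, Preadditive.comp_zsmul, hbs1, smul_smul,
              mul_comm, mul_left_comm]
            norm_cast
            rw [smul_smul, mul_assoc]
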